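/- If an optimal tree T (minimizing cost_G) contains a subtree T' whose leaf set induces a disconnected subgraph of G, then the topmost split of T' into (V_1, V_2) satisfies w(V_1, V_2) = 0. -/

import Mathlib

open Finset

/-- A rooted binary tree whose leaves are labeled by elements of `Fin n`. -/
inductive HTree (n : ℕ) : Type where
  | leaf : Fin n → HTree n
  | node : HTree n → HTree n → HTree n

namespace HTree

variable {n : ℕ}

/-- The list of leaf labels, left to right. -/
def leafList : HTree n → List (Fin n)
  | .leaf v => [v]
  | .node l r => l.leafList ++ r.leafList

/-- The set of leaf labels of a tree. -/
def leaves (T : HTree n) : Finset (Fin n) := T.leafList.toFinset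

/-- `T` is a hierarchical clustering tree of the whole vertex set `Fin n`:
its leaves are in one-to-one correspondence with `Fin n`. -/
def IsFullTree (T : HTree n) : Prop := T.leafList.Nodup ∧ T.leaves = Finset.univ

/-- `|leaves(T[i ∨ j])|`: the number of leaves of the subtree rooted at the
lowest common ancestor of leaves `i` and `j`. -/
def lcaSize : HTree n → Fin n → Fin n → ℕ
  | .leaf _, _, _ => 1
  | .node l r, i, j =>
    if i ∈ l.leaves ∧ j ∈ l.leaves then l.lcaSize i j
    else if i ∈ r.leaves ∧ j ∈ r.leaves then r.lcaSize i j
    else (l.leaves ∪ r.leaves).card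

/-- `cost_G(T) = Σ_{{i,j}} w_{ij} |leaves(T[i ∨ j])|`, the sum being over
unordered pairs (represented as ordered pairs `p.1 < p.2`). -/
def pairCost (w : Fin n → Fin n → ℝ) (T : HTree n) : ℝ :=
  ∑ p ∈ Finset.univ.filter (fun p : Fin n × Fin n => p.1 < p.2),
    w p.1 p.2 * (T.lcaSize p.1 p.2 : ℝ)

/-- `w(A, B)`: total weight of edges between `A` and `B`. -/
def cut (w : Fin n → Fin n → ℝ) (A B : Finset (Fin n)) : ℝ :=
  ∑ i ∈ A, ∑ j ∈ B, w i j

/-- The sum-of-splits formulation of the cost: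
`Σ over internal splits S → (S₁,S₂) of |S| ⬝ w(S₁,S₂)`. -/
def splitCost (w : Fin n → Fin n → ℝ) : HTree n → ℝ
  | .leaf _ => 0
  | .node l r =>
      ((l.leaves ∪ r.leaves).card : ℝ) * cut w l.leaves r.leaves
        + splitCost w l + splitCost w r

/-- `Subtree t T`: `t` occurs as a subtree of `T`. -/
inductive Subtree : HTree n → HTree n → Prop
  | refl (t : HTree n) : Subtree t t
  | left {t l r : HTree n} : Subtree t l → Subtree t (.node l r)
  | right {t l r : HTree n} : Subtree t r → Subtree t (.node l r)

end HTree

/-!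
The cost of a tree is the sum, over its internal nodes with children of leaf sets `S₁, S₂`, of
`|S₁ ∪ S₂| · w(S₁, S₂)`. Replace the subtree `node l r`, with leaf set `S = U₁ ⊔ U₂`, by a root
splitting `S` into `U₁, U₂` above the subtrees of `node l r` induced by `U₁` and `U₂`. The new
root costs nothing since `w(U₁, U₂) = 0`; the subtrees of `l` induced by `U₁` and by `U₂`
together cost at most `l` (likewise for `r`); and the two nodes replacing the old root cost
`|U₁| c₁ + |U₂| c₂`, where `cᵢ = w(l ∩ Uᵢ, r ∩ Uᵢ)`. Optimality thus gives
`(|U₁| + |U₂|) · w(l, r) ≤ |U₁| c₁ + |U₂| c₂`, which together with `c₁ + c₂ ≤ w(l, r)` forces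
`w(l, r) = 0`.
-/

theorem Finset.sum_sum_union_of_disjoint {α β : Type*} [DecidableEq α] [AddCommMonoid β]
    {A B : Finset α} (h : Disjoint A B) (g : α → α → β) :
    ∑ i ∈ A ∪ B, ∑ j ∈ A ∪ B, g i j
      = ∑ i ∈ A, ∑ j ∈ A, g i j + ∑ i ∈ B, ∑ j ∈ B, g i j + ∑ i ∈ A, ∑ j ∈ B, (g i j + g j i) := by
  simp only [Finset.sum_union h, Finset.sum_add_distrib]
  rw [Finset.sum_comm (s := B) (t := A)]
  abel

namespace HTree

variable {n : ℕ} {w : Fin n → Fin n → ℝ}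

@[simp] lemma leaves_leaf (v : Fin n) : (leaf v : HTree n).leaves = {v} := rfl

@[simp] lemma leaves_node (l r : HTree n) : (node l r).leaves = l.leaves ∪ r.leaves := by
  simp [leaves, leafList]

lemma leaves_nonempty (t : HTree n) : t.leaves.Nonempty := by
  induction t with
  | leaf v => simp
  | node l r ihl _ => simpa using ihl.mono Finset.subset_union_left

lemma nodup_leafList_node {l r : HTree n} :
    (node l r).leafList.Nodup ↔
      l.leafList.Nodup ∧ r.leafList.Nodup ∧ Disjoint l.leaves r.leaves := by
  rw [leafList, List.nodup_append, leaves, leaves, List.disjoint_toFinset_iff_disjoint]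
  simp only [List.Disjoint, ne_eq]
  grind

lemma Subtree.sublist {t T : HTree n} (h : Subtree t T) : t.leafList.Sublist T.leafList := by
  induction h with
  | refl => exact List.Sublist.refl _
  | left _ ih => exact ih.trans (List.sublist_append_left _ _)
  | right _ ih => exact ih.trans (List.sublist_append_right _ _)


lemma cut_nonneg (hw : ∀ i j, 0 ≤ w i j) (A B : Finset (Fin n)) : 0 ≤ cut w A B :=
  Finset.sum_nonneg fun i _ => Finset.sum_nonneg fun j _ => hw i j

lemma cut_mono (hw : ∀ i j, 0 ≤ w i j) {A A' B B' : Finset (Fin n)}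
    (hA : A ⊆ A') (hB : B ⊆ B') : cut w A B ≤ cut w A' B' :=
  calc cut w A B ≤ ∑ i ∈ A, ∑ j ∈ B', w i j :=
        Finset.sum_le_sum fun i _ => Finset.sum_le_sum_of_subset_of_nonneg hB fun j _ _ => hw i j
    _ ≤ cut w A' B' :=
        Finset.sum_le_sum_of_subset_of_nonneg hA fun i _ _ => Finset.sum_nonneg fun j _ => hw i j

lemma cut_union_left {A₁ A₂ B : Finset (Fin n)} (h : Disjoint A₁ A₂) :
    cut w (A₁ ∪ A₂) B = cut w A₁ B + cut w A₂ B :=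
  Finset.sum_union h

lemma cut_inter_add_cut_inter_le (hw : ∀ i j, 0 ≤ w i j) {U V : Finset (Fin n)}
    (hUV : Disjoint U V) (A B : Finset (Fin n)) :
    cut w (A ∩ U) (B ∩ U) + cut w (A ∩ V) (B ∩ V) ≤ cut w A B := by
  have hdisj : Disjoint (A ∩ U) (A ∩ V) := hUV.mono inter_subset_right inter_subset_right
  calc cut w (A ∩ U) (B ∩ U) + cut w (A ∩ V) (B ∩ V)
      ≤ cut w (A ∩ U) B + cut w (A ∩ V) B :=
        add_le_add (cut_mono hw subset_rfl inter_subset_left)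
          (cut_mono hw subset_rfl inter_subset_left)
    _ = cut w (A ∩ U ∪ A ∩ V) B := (cut_union_left hdisj).symm
    _ ≤ cut w A B := cut_mono hw (union_subset inter_subset_left inter_subset_left) subset_rfl

lemma lcaSize_node_of_mem_left {l r : HTree n} {i j : Fin n}
    (hi : i ∈ l.leaves) (hj : j ∈ l.leaves) : (node l r).lcaSize i j = l.lcaSize i j := by
  simp [lcaSize, hi, hj]

lemma lcaSize_node_of_mem_right {l r : HTree n} (h : Disjoint l.leaves r.leaves) {i j : Fin n}
    (hi : i ∈ r.leaves) (hj : j ∈ r.leaves) : (node l r).lcaSize i j = r.lcaSize i j := by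
  simp [lcaSize, hi, hj, Finset.disjoint_right.mp h hi]

lemma lcaSize_node_of_mem_left_right {l r : HTree n} (h : Disjoint l.leaves r.leaves)
    {i j : Fin n} (hi : i ∈ l.leaves) (hj : j ∈ r.leaves) :
    (node l r).lcaSize i j = (l.leaves ∪ r.leaves).card ∧
      (node l r).lcaSize j i = (l.leaves ∪ r.leaves).card := by
  simp [lcaSize, Finset.disjoint_left.mp h hi, Finset.disjoint_right.mp h hj]

lemma sum_lcaSize_eq_splitCost (hsymm : ∀ i j, w i j = w j i) {t : HTree n}
    (ht : t.leafList.Nodup) :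
    ∑ i ∈ t.leaves, ∑ j ∈ t.leaves, (if i < j then w i j * t.lcaSize i j else 0)
      = splitCost w t := by
  induction t with
  | leaf v => simp [splitCost]
  | node l r ihl ihr =>
    obtain ⟨hl, hr, hlr⟩ := nodup_leafList_node.mp ht
    have hL : ∑ i ∈ l.leaves, ∑ j ∈ l.leaves,
        (if i < j then w i j * (node l r).lcaSize i j else 0) = splitCost w l := by
      rw [← ihl hl]
      refine Finset.sum_congr rfl fun i hi => Finset.sum_congr rfl fun j hj => ?_
      rw [lcaSize_node_of_mem_left hi hj]
    have hR : ∑ i ∈ r.leaves, ∑ j ∈ r.leaves,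
        (if i < j then w i j * (node l r).lcaSize i j else 0) = splitCost w r := by
      rw [← ihr hr]
      refine Finset.sum_congr rfl fun i hi => Finset.sum_congr rfl fun j hj => ?_
      rw [lcaSize_node_of_mem_right hlr hi hj]
    have hC : ∑ i ∈ l.leaves, ∑ j ∈ r.leaves,
        ((if i < j then w i j * (node l r).lcaSize i j else 0)
          + if j < i then w j i * (node l r).lcaSize j i else 0)
          = ((l.leaves ∪ r.leaves).card : ℝ) * cut w l.leaves r.leaves := by
      simp_rw [cut, Finset.mul_sum]
      refine Finset.sum_congr rfl fun i hi => Finset.sum_congr rfl fun j hj => ?_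
      obtain ⟨hij, hji⟩ := lcaSize_node_of_mem_left_right hlr hi hj
      have hne : i ≠ j := fun h => Finset.disjoint_left.mp hlr hi (h ▸ hj)
      rcases hne.lt_or_gt with h | h
      · simp [h, h.not_gt, hij, mul_comm]
      · simp [h, h.not_gt, hji, hsymm j i, mul_comm]
    rw [leaves_node, Finset.sum_sum_union_of_disjoint hlr, hL, hR, hC, splitCost]
    ring

lemma pairCost_eq_splitCost (hsymm : ∀ i j, w i j = w j i) {T : HTree n} (hT : T.IsFullTree) :
    pairCost w T = splitCost w T := by
  rw [← sum_lcaSize_eq_splitCost hsymm hT.1, pairCost, Finset.sum_filter, Fintype.sum_prod_type,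
    hT.2]


lemma Subtree.exists_replace {t T : HTree n} (hsub : Subtree t T) (hT : T.leafList.Nodup)
    {t' : HTree n} (hleaves : t'.leaves = t.leaves) (ht' : t'.leafList.Nodup) :
    ∃ T' : HTree n, T'.leaves = T.leaves ∧ T'.leafList.Nodup ∧
      splitCost w T' + splitCost w t = splitCost w T + splitCost w t' := by
  induction hsub with
  | refl => exact ⟨t', hleaves, ht', add_comm _ _⟩
  | @left l r _ ih =>
    obtain ⟨hl, hr, hlr⟩ := nodup_leafList_node.mp hT
    obtain ⟨L, hL, hLnd, hLcost⟩ := ih hl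
    refine ⟨node L r, by simp [hL], nodup_leafList_node.mpr ⟨hLnd, hr, hL ▸ hlr⟩, ?_⟩
    simp only [splitCost, hL]
    linarith
  | @right l r _ ih =>
    obtain ⟨hl, hr, hlr⟩ := nodup_leafList_node.mp hT
    obtain ⟨R, hR, hRnd, hRcost⟩ := ih hr
    refine ⟨node l R, by simp [hR], nodup_leafList_node.mpr ⟨hl, hRnd, hR ▸ hlr⟩, ?_⟩
    simp only [splitCost, hR]
    linarith

lemma IsFullTree.splitCost_subtree_le {T : HTree n} (hT : T.IsFullTree)
    (hsymm : ∀ i j, w i j = w j i)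
    (hopt : ∀ T' : HTree n, T'.IsFullTree → T.pairCost w ≤ T'.pairCost w)
    {t : HTree n} (hsub : Subtree t T) {t' : HTree n} (hleaves : t'.leaves = t.leaves)
    (ht' : t'.leafList.Nodup) : splitCost w t ≤ splitCost w t' := by
  obtain ⟨T', hT'leaves, hT'nd, hcost⟩ := hsub.exists_replace (w := w) hT.1 hleaves ht'
  have hT' : T'.IsFullTree := ⟨hT'nd, hT'leaves.trans hT.2⟩
  have := hopt T' hT'
  rw [pairCost_eq_splitCost hsymm hT, pairCost_eq_splitCost hsymm hT'] at this
  linarith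


def optNode : Option (HTree n) → Option (HTree n) → Option (HTree n)
  | some a, some b => some (node a b)
  | some a, none => some a
  | none, b => b

def restrict (U : Finset (Fin n)) : HTree n → Option (HTree n)
  | .leaf v => if v ∈ U then some (.leaf v) else none
  | .node l r => optNode (restrict U l) (restrict U r)

def optLeafList (o : Option (HTree n)) : List (Fin n) := o.elim [] leafList

def optLeaves (o : Option (HTree n)) : Finset (Fin n) := (optLeafList o).toFinset

def optSplitCost (w : Fin n → Fin n → ℝ) (o : Option (HTree n)) : ℝ := o.elim 0 (splitCost w)

def regroup (U V : Finset (Fin n)) (t : HTree n) : Option (HTree n) :=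
  optNode (restrict U t) (restrict V t)

lemma optLeafList_optNode (a b : Option (HTree n)) :
    optLeafList (optNode a b) = optLeafList a ++ optLeafList b := by
  cases a <;> cases b <;> simp [optNode, optLeafList, leafList]

lemma optLeafList_restrict (U : Finset (Fin n)) (t : HTree n) :
    optLeafList (restrict U t) = t.leafList.filter (· ∈ U) := by
  induction t with
  | leaf v => by_cases h : v ∈ U <;> simp [restrict, optLeafList, leafList, h]
  | node l r ihl ihr =>
    rw [restrict, optLeafList_optNode, ihl, ihr, leafList, List.filter_append]

lemma optLeaves_restrict (U : Finset (Fin n)) (t : HTree n) :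
    optLeaves (restrict U t) = t.leaves ∩ U := by
  ext a
  simp [optLeaves, optLeafList_restrict, leaves]

lemma optSplitCost_optNode (a b : Option (HTree n)) :
    optSplitCost w (optNode a b)
      = ((optLeaves a ∪ optLeaves b).card : ℝ) * cut w (optLeaves a) (optLeaves b)
        + optSplitCost w a + optSplitCost w b := by
  cases a <;> cases b <;>
    simp [optNode, optSplitCost, optLeaves, optLeafList, splitCost, cut, leaves]

lemma optSplitCost_restrict_node (U : Finset (Fin n)) (l r : HTree n) :
    optSplitCost w (restrict U (node l r))
      = (((l.leaves ∪ r.leaves) ∩ U).card : ℝ) * cut w (l.leaves ∩ U) (r.leaves ∩ U)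
        + optSplitCost w (restrict U l) + optSplitCost w (restrict U r) := by
  rw [restrict, optSplitCost_optNode, optLeaves_restrict, optLeaves_restrict,
    Finset.union_inter_distrib_right]

lemma optSplitCost_restrict_add_le (hw : ∀ i j, 0 ≤ w i j) {U V : Finset (Fin n)}
    (hUV : Disjoint U V) (t : HTree n) :
    optSplitCost w (restrict U t) + optSplitCost w (restrict V t) ≤ splitCost w t := by
  induction t with
  | leaf v =>
    by_cases hU : v ∈ U <;> by_cases hV : v ∈ V <;> simp [restrict, optSplitCost, splitCost, hU, hV]
  | node l r ihl ihr =>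
    set S := l.leaves ∪ r.leaves
    have hcard (X : Finset (Fin n)) : ((S ∩ X).card : ℝ) ≤ S.card := by
      exact_mod_cast Finset.card_le_card Finset.inter_subset_left
    have hU := mul_le_mul_of_nonneg_right (hcard U) (cut_nonneg hw (l.leaves ∩ U) (r.leaves ∩ U))
    have hV := mul_le_mul_of_nonneg_right (hcard V) (cut_nonneg hw (l.leaves ∩ V) (r.leaves ∩ V))
    have hcut := mul_le_mul_of_nonneg_left (cut_inter_add_cut_inter_le hw hUV l.leaves r.leaves)
      (Nat.cast_nonneg S.card : (0 : ℝ) ≤ S.card)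
    rw [optSplitCost_restrict_node, optSplitCost_restrict_node, splitCost]
    linarith

lemma exists_regroup_eq_some {U V : Finset (Fin n)} (hUV : Disjoint U V) {t : HTree n}
    (ht : t.leafList.Nodup) (htUV : t.leaves ⊆ U ∪ V) :
    ∃ t', regroup U V t = some t' ∧ t'.leaves = t.leaves ∧ t'.leafList.Nodup := by
  have hleaves : optLeaves (regroup U V t) = t.leaves := by
    rw [regroup, optLeaves, optLeafList_optNode, List.toFinset_append, ← optLeaves, ← optLeaves,
      optLeaves_restrict, optLeaves_restrict, ← Finset.inter_union_distrib_left,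
      Finset.inter_eq_left.mpr htUV]
  have hnd : (optLeafList (regroup U V t)).Nodup := by
    rw [regroup, optLeafList_optNode, optLeafList_restrict, optLeafList_restrict]
    refine List.nodup_append.mpr ⟨ht.filter _, ht.filter _, ?_⟩
    simp only [List.mem_filter, decide_eq_true_eq]
    rintro a ⟨-, haU⟩ b ⟨-, hbV⟩ rfl
    exact Finset.disjoint_left.mp hUV haU hbV
  cases h : regroup U V t with
  | none =>
    rw [h] at hleaves
    exact absurd hleaves.symm (leaves_nonempty t).ne_empty
  | some t' =>
    rw [h] at hleaves hnd
    exact ⟨t', rfl, hleaves, hnd⟩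

lemma optSplitCost_regroup_node_le (hw : ∀ i j, 0 ≤ w i j) {U V : Finset (Fin n)}
    (hUV : Disjoint U V) (hcut : cut w U V = 0) (l r : HTree n) :
    optSplitCost w (regroup U V (node l r))
      ≤ (((l.leaves ∪ r.leaves) ∩ U).card : ℝ) * cut w (l.leaves ∩ U) (r.leaves ∩ U)
        + (((l.leaves ∪ r.leaves) ∩ V).card : ℝ) * cut w (l.leaves ∩ V) (r.leaves ∩ V)
        + splitCost w l + splitCost w r := by
  have hsep : cut w (optLeaves (restrict U (node l r))) (optLeaves (restrict V (node l r))) = 0 :=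
    le_antisymm (hcut ▸ cut_mono hw (by simp [optLeaves_restrict]) (by simp [optLeaves_restrict]))
      (cut_nonneg hw _ _)
  rw [regroup, optSplitCost_optNode, hsep, mul_zero, zero_add, optSplitCost_restrict_node,
    optSplitCost_restrict_node]
  linarith [optSplitCost_restrict_add_le hw hUV l, optSplitCost_restrict_add_le hw hUV r]

lemma cut_eq_zero_of_card_mul_cut_le (hw : ∀ i j, 0 ≤ w i j) {U V : Finset (Fin n)}
    (hUV : Disjoint U V) (hU : U.Nonempty) (hV : V.Nonempty) {A B : Finset (Fin n)}
    (hAB : A ∪ B = U ∪ V)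
    (h : ((A ∪ B).card : ℝ) * cut w A B
      ≤ U.card * cut w (A ∩ U) (B ∩ U) + V.card * cut w (A ∩ V) (B ∩ V)) :
    cut w A B = 0 := by
  have hcard : ((A ∪ B).card : ℝ) = U.card + V.card := by
    rw [hAB, Finset.card_union_of_disjoint hUV, Nat.cast_add]
  have hU1 : (1 : ℝ) ≤ U.card := by exact_mod_cast hU.card_pos
  have hV1 : (1 : ℝ) ≤ V.card := by exact_mod_cast hV.card_pos
  have hsum := cut_inter_add_cut_inter_le hw hUV A B
  have hcU := cut_nonneg hw (A ∩ U) (B ∩ U)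
  have hcV := cut_nonneg hw (A ∩ V) (B ∩ V)
  rw [hcard] at h
  nlinarith [cut_nonneg hw A B]

end HTree

/-- If an optimal tree contains a subtree whose leaf set induces a disconnected
subgraph of `G`, then the topmost split `(V₁, V₂)` of that subtree has `w(V₁,V₂) = 0`. -/
theorem optimal_tree_splits_components (n : ℕ) (w : Fin n → Fin n → ℝ)
    (hsymm : ∀ i j, w i j = w j i) (hnonneg : ∀ i j, 0 ≤ w i j)
    (T : HTree n) (hT : T.IsFullTree)
    (hopt : ∀ T' : HTree n, T'.IsFullTree → T.pairCost w ≤ T'.pairCost w)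
    (l r : HTree n) (hsub : HTree.Subtree (.node l r) T)
    (U₁ U₂ : Finset (Fin n)) (hU₁ : U₁.Nonempty) (hU₂ : U₂.Nonempty)
    (hdisj : Disjoint U₁ U₂) (hunion : U₁ ∪ U₂ = l.leaves ∪ r.leaves)
    (hcut : HTree.cut w U₁ U₂ = 0) :
    HTree.cut w l.leaves r.leaves = 0 := by
  obtain ⟨t', hregroup, hleaves, ht'⟩ := HTree.exists_regroup_eq_some hdisj
    (hT.1.sublist hsub.sublist) (by rw [HTree.leaves_node, hunion])
  have hle : HTree.splitCost w (.node l r) ≤ HTree.splitCost w t' :=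
    hT.splitCost_subtree_le hsymm hopt hsub hleaves ht'
  have hcost := HTree.optSplitCost_regroup_node_le hnonneg hdisj hcut l r
  rw [hregroup, ← hunion, Finset.inter_eq_right.mpr Finset.subset_union_left,
    Finset.inter_eq_right.mpr Finset.subset_union_right] at hcost
  refine HTree.cut_eq_zero_of_card_mul_cut_le hnonneg hdisj hU₁ hU₂ hunion.symm ?_
  rw [HTree.splitCost] at hle
  linarith [hle.trans hcost]
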